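/- Let n ≥ 2 and let h be an n×n real symmetric matrix satisfying h i j = 0 whenever i ≠ j and both i, j lie among the first n−1 indices, and h i i > 0 for every i among the first n−1 indices. Assume det h = 0 and h n n = 0. Then h i n = 0 for every i < n (so h is diagonal), and the kernel of h is exactly the span of the last standard basis vector eₙ. -/

import Mathlib

/-!
Take `v ≠ 0` in the kernel of `h`. The rows `i ≠ k` give `h i k * v k = -(h i i * v i)`, so
`v k` times the `k`-th row, using symmetry and `h k k = 0`, reads `∑_{i ≠ k} h i i * v i ^ 2 = 0`.
Positivity of the diagonal forces `v i = 0` for `i ≠ k`; hence `v k ≠ 0`, and the rows `i ≠ k`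
then give `h i k = 0`. So `h` is diagonal with a single zero diagonal entry, at `k`.
-/

open Finset

namespace Matrix

variable {ι : Type*}

def IsArrowhead {R : Type*} [Zero R] (h : Matrix ι ι R) (k : ι) : Prop :=
  ∀ i j, i ≠ j → i ≠ k → j ≠ k → h i j = 0

variable [Fintype ι] {h : Matrix ι ι ℝ} {k : ι}

theorem IsArrowhead.mulVec_apply (harrow : h.IsArrowhead k) (v : ι → ℝ) {i : ι} (hi : i ≠ k) :
    (h *ᵥ v) i = h i i * v i + h i k * v k :=
  Fintype.sum_eq_add i k hi fun j hj => mul_eq_zero_of_left (harrow i j (Ne.symm hj.1) hi hj.2) _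

variable [DecidableEq ι]

theorem IsArrowhead.apply_eq_zero_of_mulVec_eq_zero (harrow : h.IsArrowhead k) (hsymm : h.IsSymm)
    (hpos : ∀ i ≠ k, 0 < h i i) (hkk : h k k = 0) {v : ι → ℝ} (hv : h *ᵥ v = 0) {i : ι}
    (hi : i ≠ k) : v i = 0 := by
  have hrow : ∀ j ≠ k, h k j * v k = -(h j j * v j) := fun j hj => by
    have := harrow.mulVec_apply v hj
    rw [hv, Pi.zero_apply] at this
    rw [hsymm.apply]
    linarith
  have hquad : ∑ j ∈ univ.erase k, h j j * v j ^ 2 = 0 := by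
    have hk : (∑ j, h k j * v j) * v k = 0 := by
      rw [show ∑ j, h k j * v j = (h *ᵥ v) k from rfl, hv, Pi.zero_apply, zero_mul]
    rw [sum_mul, ← add_sum_erase _ _ (mem_univ k), hkk, zero_mul, zero_mul, zero_add] at hk
    rw [← neg_eq_zero, ← hk, ← sum_neg_distrib]
    refine sum_congr rfl fun j hj => ?_
    rw [mul_right_comm, hrow j (ne_of_mem_erase hj)]
    ring
  have hterm := (sum_eq_zero_iff_of_nonneg fun j hj =>
    mul_nonneg (hpos j (ne_of_mem_erase hj)).le (sq_nonneg (v j))).1 hquad i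
    (mem_erase.2 ⟨hi, mem_univ i⟩)
  exact pow_eq_zero_iff two_ne_zero |>.1 <| (mul_eq_zero.1 hterm).resolve_left (hpos i hi).ne'

theorem IsArrowhead.apply_eq_zero_of_det_eq_zero (harrow : h.IsArrowhead k) (hsymm : h.IsSymm)
    (hpos : ∀ i ≠ k, 0 < h i i) (hkk : h k k = 0) (hdet : h.det = 0) {i : ι} (hi : i ≠ k) :
    h i k = 0 := by
  obtain ⟨v, hv0, hv⟩ := exists_mulVec_eq_zero_iff.2 hdet
  have hvanish : ∀ j ≠ k, v j = 0 := fun j hj =>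
    harrow.apply_eq_zero_of_mulVec_eq_zero hsymm hpos hkk hv hj
  have hvk : v k ≠ 0 := fun hvk => hv0 <| funext fun j => by
    by_cases hj : j = k
    · rw [hj, hvk, Pi.zero_apply]
    · exact hvanish j hj
  have hrow := harrow.mulVec_apply v hi
  rw [hv, Pi.zero_apply, hvanish i hi, mul_zero, zero_add, eq_comm] at hrow
  exact (mul_eq_zero.1 hrow).resolve_right hvk

theorem IsArrowhead.isDiag_of_det_eq_zero (harrow : h.IsArrowhead k) (hsymm : h.IsSymm)
    (hpos : ∀ i ≠ k, 0 < h i i) (hkk : h k k = 0) (hdet : h.det = 0) : h.IsDiag := by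
  intro i j hij
  by_cases hj : j = k
  · exact hj ▸ harrow.apply_eq_zero_of_det_eq_zero hsymm hpos hkk hdet (hj ▸ hij)
  by_cases hi : i = k
  · rw [← hsymm.apply]
    exact hi ▸ harrow.apply_eq_zero_of_det_eq_zero hsymm hpos hkk hdet (hi ▸ hij.symm)
  · exact harrow i j hij hi hj

theorem setOf_diagonal_mulVec_eq_zero {K : Type*} [Field K] {d : ι → K}
    (hd : ∀ i ≠ k, d i ≠ 0) (hdk : d k = 0) :
    {ξ : ι → K | diagonal d *ᵥ ξ = 0} = ↑(Submodule.span K {(Pi.single k 1 : ι → K)}) := by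
  ext ξ
  simp only [Set.mem_ofPred_eq, SetLike.mem_coe, Submodule.mem_span_singleton]
  constructor
  · intro hξ
    refine ⟨ξ k, funext fun i => ?_⟩
    have hξi := congrFun hξ i
    rw [mulVec_diagonal, Pi.zero_apply] at hξi
    rw [Pi.smul_apply, smul_eq_mul]
    by_cases hi : i = k
    · rw [hi, Pi.single_eq_same, mul_one]
    · rw [Pi.single_eq_of_ne hi, mul_zero, (mul_eq_zero.1 hξi).resolve_left (hd i hi)]
  · rintro ⟨a, rfl⟩
    ext i
    rw [mulVec_diagonal, Pi.zero_apply, Pi.smul_apply, smul_eq_mul]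
    by_cases hi : i = k
    · rw [hi, hdk, zero_mul]
    · rw [Pi.single_eq_of_ne hi, mul_zero, mul_zero]

end Matrix

/-- The case `h n n = 0`: a singular "arrowhead" symmetric matrix with vanishing
last diagonal entry is diagonal, and its kernel is spanned by the last standard
basis vector. -/
theorem stmt_3 (n : ℕ) (hn : 2 ≤ n) (h : Matrix (Fin n) (Fin n) ℝ)
    (hsymm : ∀ i j : Fin n, h i j = h j i)
    (hdiag : ∀ i j : Fin n, i ≠ j → (i : ℕ) < n - 1 → (j : ℕ) < n - 1 → h i j = 0)
    (hpos : ∀ i : Fin n, (i : ℕ) < n - 1 → 0 < h i i)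
    (hdet : h.det = 0)
    (hnn : h ⟨n - 1, by omega⟩ ⟨n - 1, by omega⟩ = 0) :
    (∀ i : Fin n, (i : ℕ) < n - 1 → h i ⟨n - 1, by omega⟩ = 0) ∧
    (∀ i j : Fin n, i ≠ j → h i j = 0) ∧
    {ξ : Fin n → ℝ | h.mulVec ξ = 0} =
      ↑(Submodule.span ℝ {(Pi.single (⟨n - 1, by omega⟩ : Fin n) 1 : Fin n → ℝ)}) := by
  set N : Fin n := ⟨n - 1, by omega⟩
  have hlast : ∀ i : Fin n, (i : ℕ) < n - 1 ↔ i ≠ N := fun i => by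
    rw [Ne, Fin.ext_iff, show (N : ℕ) = n - 1 from rfl]
    have := i.is_lt
    omega
  have harrow : h.IsArrowhead N := fun i j hij hi hj =>
    hdiag i j hij ((hlast i).2 hi) ((hlast j).2 hj)
  have hpos' : ∀ i ≠ N, 0 < h i i := fun i hi => hpos i ((hlast i).2 hi)
  have hS : h.IsSymm := Matrix.IsSymm.ext fun i j => hsymm j i
  have hD := harrow.isDiag_of_det_eq_zero hS hpos' hnn hdet
  refine ⟨fun i hi => hD ((hlast i).1 hi), hD, ?_⟩
  rw [← hD.diagonal_diag]
  exact Matrix.setOf_diagonal_mulVec_eq_zero (fun i hi => (hpos' i hi).ne') hnn
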